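/- For nonempty finite words u and v over a totally ordered alphabet, the following six conditions are pairwise equivalent: (1) u^ω < v^ω; (2) (uv)^ω < v^ω; (3) u^ω < (vu)^ω; (4) (uv)^ω < (vu)^ω; (5) u^ω < (uv)^ω; (6) (vu)^ω < v^ω. Here < is the lexicographic order on infinite words. -/
import Mathlib


variable {A : Type*} [LinearOrder A] [Inhabited A]

/-- The infinite periodic word `u^ω = uuu⋯`, as a function `ℕ → A`. -/
def omegaPow (u : List A) : ℕ → A := fun n => u.getD (n % u.length) default

/-- Lexicographic order on infinite words: `s < t` iff at the first position where
they differ, `s` has the smaller letter. -/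
def lexLt (s t : ℕ → A) : Prop := ∃ k, (∀ i < k, s i = t i) ∧ s k < t k

/-! ### Auxiliary material -/

/-- Prepend a finite word to an infinite word. -/
def prep (w : List A) (s : ℕ → A) : ℕ → A :=
  fun n => if n < w.length then w.getD n default else s (n - w.length)

lemma prep_add (w : List A) (s : ℕ → A) (i : ℕ) :
    prep w s (i + w.length) = s i := by
  unfold prep
  rw [if_neg (by omega), Nat.add_sub_cancel]

lemma prep_lt (w : List A) (s : ℕ → A) {i : ℕ} (h : i < w.length) :
    prep w s i = w.getD i default := by
  unfold prep; rw [if_pos h]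

lemma prep_nil (s : ℕ → A) : prep [] s = s := by
  funext n; simp [prep]

lemma prep_prep (u v : List A) (s : ℕ → A) :
    prep u (prep v s) = prep (u ++ v) s := by
  funext n
  simp only [prep, List.length_append]
  rcases lt_or_ge n u.length with h | h
  · rw [if_pos h, if_pos (by omega), List.getD_append _ _ _ _ h]
  · rw [if_neg (by omega)]
    rcases lt_or_ge n (u.length + v.length) with h2 | h2
    · rw [if_pos h2, if_pos (by omega), List.getD_append_right _ _ _ _ h]
    · rw [if_neg (by omega), if_neg (by omega), Nat.sub_sub]

lemma prep_omegaPow (w : List A) : prep w (omegaPow w) = omegaPow w := by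
  funext n
  unfold prep omegaPow
  rcases lt_or_ge n w.length with h | h
  · rw [if_pos h, Nat.mod_eq_of_lt h]
  · rw [if_neg (by omega)]
    rcases Nat.eq_zero_or_pos w.length with h0 | h0
    · simp [h0]
    · rw [Nat.mod_eq_sub_mod h]

lemma prep_fixed {w : List A} (hw : w ≠ []) {s : ℕ → A} (h : prep w s = s) :
    s = omegaPow w := by
  have hlen : 0 < w.length := List.length_pos_iff.mpr hw
  funext n
  induction n using Nat.strong_induction_on with
  | _ n ih =>
    have h1 := congrFun h n
    by_cases hn : n < w.length
    · rw [prep_lt _ _ hn] at h1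
      rw [← h1]
      unfold omegaPow
      rw [Nat.mod_eq_of_lt hn]
    · unfold prep at h1
      rw [if_neg hn] at h1
      push_neg at hn
      rw [← h1, ih (n - w.length) (by omega)]
      unfold omegaPow
      rw [Nat.mod_eq_sub_mod hn]

lemma lexLt_irrefl {s : ℕ → A} (h : lexLt s s) : False := by
  obtain ⟨k, -, hk⟩ := h; exact lt_irrefl _ hk

lemma lexLt_trans {s t r : ℕ → A} (h1 : lexLt s t) (h2 : lexLt t r) : lexLt s r := by
  obtain ⟨k1, a1, l1⟩ := h1
  obtain ⟨k2, a2, l2⟩ := h2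
  refine ⟨min k1 k2, fun i hi =>
    (a1 i (lt_of_lt_of_le hi (min_le_left _ _))).trans
      (a2 i (lt_of_lt_of_le hi (min_le_right _ _))), ?_⟩
  rcases lt_trichotomy k1 k2 with h | h | h
  · rw [min_eq_left h.le, ← a2 k1 h]; exact l1
  · subst h; rw [min_self]; exact l1.trans l2
  · rw [min_eq_right h.le, a1 k2 h]; exact l2

lemma lexLt_asymm {s t : ℕ → A} (h1 : lexLt s t) (h2 : lexLt t s) : False :=
  lexLt_irrefl (lexLt_trans h1 h2)

lemma lexLt_total {s t : ℕ → A} (h : s ≠ t) : lexLt s t ∨ lexLt t s := by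
  have hex : ∃ k, s k ≠ t k := by
    by_contra h'
    push_neg at h'
    exact h (funext h')
  classical
  have hk : s (Nat.find hex) ≠ t (Nat.find hex) := Nat.find_spec hex
  have hmin : ∀ i < Nat.find hex, s i = t i := fun i hi =>
    not_not.mp (Nat.find_min hex hi)
  rcases hk.lt_or_gt with hl | hl
  · exact Or.inl ⟨_, hmin, hl⟩
  · exact Or.inr ⟨_, fun i hi => (hmin i hi).symm, hl⟩

lemma lexLt_prep_iff (w : List A) {s t : ℕ → A} :
    lexLt (prep w s) (prep w t) ↔ lexLt s t := by
  constructor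
  · rintro ⟨k, ag, lt⟩
    have hk : w.length ≤ k := by
      by_contra hk
      push_neg at hk
      rw [prep_lt _ _ hk, prep_lt _ _ hk] at lt
      exact lt_irrefl _ lt
    refine ⟨k - w.length, fun i hi => ?_, ?_⟩
    · have := ag (i + w.length) (by omega)
      rwa [prep_add, prep_add] at this
    · have : k = (k - w.length) + w.length := by omega
      rw [this, prep_add, prep_add] at lt
      exact lt
  · rintro ⟨k, ag, lt⟩
    refine ⟨k + w.length, fun i hi => ?_, by rw [prep_add, prep_add]; exact lt⟩
    rcases lt_or_ge i w.length with h | h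
    · rw [prep_lt _ _ h, prep_lt _ _ h]
    · have : i = (i - w.length) + w.length := by omega
      rw [this, prep_add, prep_add]
      exact ag _ (by omega)

/-- `n`-fold repetition of a finite word. -/
def repW (w : List A) : ℕ → List A
  | 0 => []
  | n + 1 => w ++ repW w n

lemma length_repW (w : List A) (n : ℕ) : (repW w n).length = n * w.length := by
  induction n with
  | zero => simp [repW]
  | succ n ih => simp [repW, ih]; ring

lemma getD_repW (w : List A) (n : ℕ) :
    ∀ i < n * w.length, (repW w n).getD i default = w.getD (i % w.length) default := by
  induction n with
  | zero => intro i hi; omega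
  | succ n ih =>
    intro i hi
    have hlen : 0 < w.length := by
      rcases Nat.eq_zero_or_pos w.length with h0 | h0
      · rw [h0, Nat.mul_zero] at hi; omega
      · exact h0
    show (w ++ repW w n).getD i default = _
    rcases lt_or_ge i w.length with h | h
    · rw [List.getD_append _ _ _ _ h, Nat.mod_eq_of_lt h]
    · rw [List.getD_append_right _ _ _ _ h, ih (i - w.length) (by
        rw [Nat.succ_mul] at hi; omega), ← Nat.mod_eq_sub_mod h]

lemma prep_repW_eq (w : List A) (s : ℕ → A) (n : ℕ) {i : ℕ} (hi : i < n * w.length) :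
    prep (repW w n) s i = omegaPow w i := by
  rw [prep_lt _ _ (by rw [length_repW]; exact hi), getD_repW w n i hi]
  rfl

lemma chain_lt {w : List A} {s : ℕ → A} (h : lexLt (prep w s) s) :
    ∀ n, lexLt (prep (repW w (n + 1)) s) s := by
  intro n
  induction n with
  | zero =>
    show lexLt (prep (w ++ repW w 0) s) s
    rw [show repW w 0 = ([] : List A) from rfl, List.append_nil]
    exact h
  | succ n ih =>
    have h2 := (lexLt_prep_iff w).mpr ih
    rw [prep_prep] at h2
    exact lexLt_trans h2 h

lemma chain_gt {w : List A} {s : ℕ → A} (h : lexLt s (prep w s)) :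
    ∀ n, lexLt s (prep (repW w (n + 1)) s) := by
  intro n
  induction n with
  | zero =>
    show lexLt s (prep (w ++ repW w 0) s)
    rw [show repW w 0 = ([] : List A) from rfl, List.append_nil]
    exact h
  | succ n ih =>
    have h2 := (lexLt_prep_iff w).mpr ih
    rw [prep_prep] at h2
    exact lexLt_trans h h2

lemma omega_lt_of_prep_lt {w : List A} (hw : w ≠ []) {s : ℕ → A}
    (h : lexLt (prep w s) s) : lexLt (omegaPow w) s := by
  classical
  have hlen : 0 < w.length := List.length_pos_iff.mpr hw
  have hne : omegaPow w ≠ s := by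
    intro he
    rw [← he, prep_omegaPow, he] at h
    exact lexLt_irrefl h
  have hex : ∃ k, omegaPow w k ≠ s k := by
    by_contra h'
    push_neg at h'
    exact hne (funext h')
  set k := Nat.find hex with hkdef
  have hk : omegaPow w k ≠ s k := Nat.find_spec hex
  have hmin : ∀ i < k, omegaPow w i = s i := fun i hi => not_not.mp (Nat.find_min hex hi)
  obtain ⟨j, ag, lt⟩ := chain_lt h k
  have hbig : ∀ i ≤ k, prep (repW w (k + 1)) s i = omegaPow w i := by
    intro i hi
    refine prep_repW_eq w s (k + 1) ?_
    have : k + 1 ≤ (k + 1) * w.length := Nat.le_mul_of_pos_right _ hlen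
    omega
  have hjk : j = k := by
    rcases lt_trichotomy j k with hlt | he | hgt
    · exfalso
      rw [hbig j hlt.le, hmin j hlt] at lt
      exact lt_irrefl _ lt
    · exact he
    · exfalso
      have := ag k hgt
      rw [hbig k le_rfl] at this
      exact hk this
  rw [hjk, hbig k le_rfl] at lt
  exact ⟨k, hmin, lt⟩

lemma lt_omega_of_lt_prep {w : List A} (hw : w ≠ []) {s : ℕ → A}
    (h : lexLt s (prep w s)) : lexLt s (omegaPow w) := by
  classical
  have hlen : 0 < w.length := List.length_pos_iff.mpr hw
  have hne : s ≠ omegaPow w := by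
    intro he
    rw [he] at h
    rw [prep_omegaPow] at h
    exact lexLt_irrefl h
  have hex : ∃ k, s k ≠ omegaPow w k := by
    by_contra h'
    push_neg at h'
    exact hne (funext h')
  set k := Nat.find hex with hkdef
  have hk : s k ≠ omegaPow w k := Nat.find_spec hex
  have hmin : ∀ i < k, s i = omegaPow w i := fun i hi => not_not.mp (Nat.find_min hex hi)
  obtain ⟨j, ag, lt⟩ := chain_gt h k
  have hbig : ∀ i ≤ k, prep (repW w (k + 1)) s i = omegaPow w i := by
    intro i hi
    refine prep_repW_eq w s (k + 1) ?_
    have : k + 1 ≤ (k + 1) * w.length := Nat.le_mul_of_pos_right _ hlen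
    omega
  have hjk : j = k := by
    rcases lt_trichotomy j k with hlt | he | hgt
    · exfalso
      rw [hbig j hlt.le, ← hmin j hlt] at lt
      exact lt_irrefl _ lt
    · exact he
    · exfalso
      have := ag k hgt
      rw [hbig k le_rfl] at this
      exact hk this
  rw [hjk, hbig k le_rfl] at lt
  exact ⟨k, hmin, lt⟩

lemma omega_lt_iff {w : List A} (hw : w ≠ []) (s : ℕ → A) :
    lexLt (omegaPow w) s ↔ lexLt (prep w s) s := by
  constructor
  · intro h
    by_cases he : prep w s = s
    · exfalso
      have hs := prep_fixed hw he
      rw [hs] at h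
      exact lexLt_irrefl h
    · rcases lexLt_total he with h' | h'
      · exact h'
      · exact absurd (lt_omega_of_lt_prep hw h') (fun h'' => lexLt_asymm h h'')
  · exact omega_lt_of_prep_lt hw

lemma lt_omega_iff {w : List A} (hw : w ≠ []) (s : ℕ → A) :
    lexLt s (omegaPow w) ↔ lexLt s (prep w s) := by
  constructor
  · intro h
    by_cases he : prep w s = s
    · exfalso
      have hs := prep_fixed hw he
      rw [hs] at h
      exact lexLt_irrefl h
    · rcases lexLt_total he with h' | h'
      · exact absurd (omega_lt_of_prep_lt hw h') (fun h'' => lexLt_asymm h h'')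
      · exact h'
  · exact lt_omega_of_lt_prep hw

/-- For nonempty words `u, v`, the six conditions
`u^ω < v^ω`, `(uv)^ω < v^ω`, `u^ω < (vu)^ω`, `(uv)^ω < (vu)^ω`, `u^ω < (uv)^ω`,
`(vu)^ω < v^ω` are pairwise equivalent. -/
theorem omegaPow_lt_tfae (u v : List A) (hu : u ≠ []) (hv : v ≠ []) :
    (lexLt (omegaPow u) (omegaPow v) ↔ lexLt (omegaPow (u ++ v)) (omegaPow v)) ∧
    (lexLt (omegaPow u) (omegaPow v) ↔ lexLt (omegaPow u) (omegaPow (v ++ u))) ∧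
    (lexLt (omegaPow u) (omegaPow v) ↔ lexLt (omegaPow (u ++ v)) (omegaPow (v ++ u))) ∧
    (lexLt (omegaPow u) (omegaPow v) ↔ lexLt (omegaPow u) (omegaPow (u ++ v))) ∧
    (lexLt (omegaPow u) (omegaPow v) ↔ lexLt (omegaPow (v ++ u)) (omegaPow v)) := by
  have huv : u ++ v ≠ [] := fun h => hu (List.append_eq_nil_iff.mp h).1
  have hvu : v ++ u ≠ [] := fun h => hv (List.append_eq_nil_iff.mp h).1
  have F2 : prep v (omegaPow (u ++ v)) = omegaPow (v ++ u) := by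
    have key : prep (v ++ u) (prep v (omegaPow (u ++ v))) = prep v (omegaPow (u ++ v)) := by
      calc prep (v ++ u) (prep v (omegaPow (u ++ v)))
          = prep v (prep u (prep v (omegaPow (u ++ v)))) := (prep_prep v u _).symm
        _ = prep v (prep (u ++ v) (omegaPow (u ++ v))) :=
            congrArg (prep v) (prep_prep u v _)
        _ = prep v (omegaPow (u ++ v)) := by rw [prep_omegaPow]
    exact prep_fixed hvu key
  have F3 : prep u (omegaPow (v ++ u)) = omegaPow (u ++ v) := by
    have key : prep (u ++ v) (prep u (omegaPow (v ++ u))) = prep u (omegaPow (v ++ u)) := by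
      calc prep (u ++ v) (prep u (omegaPow (v ++ u)))
          = prep u (prep v (prep u (omegaPow (v ++ u)))) := (prep_prep u v _).symm
        _ = prep u (prep (v ++ u) (omegaPow (v ++ u))) :=
            congrArg (prep u) (prep_prep v u _)
        _ = prep u (omegaPow (v ++ u)) := by rw [prep_omegaPow]
    exact prep_fixed huv key
  have Fx : prep u (omegaPow u) = omegaPow u := prep_omegaPow u
  have E13 : lexLt (omegaPow u) (omegaPow v) ↔ lexLt (omegaPow u) (omegaPow (v ++ u)) := by
    rw [lt_omega_iff hv (omegaPow u), lt_omega_iff hvu (omegaPow u), ← prep_prep, Fx]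
  have E34 : lexLt (omegaPow u) (omegaPow (v ++ u)) ↔
      lexLt (omegaPow (u ++ v)) (omegaPow (v ++ u)) := by
    rw [omega_lt_iff hu (omegaPow (v ++ u)), F3]
  have E24 : lexLt (omegaPow (u ++ v)) (omegaPow v) ↔
      lexLt (omegaPow (u ++ v)) (omegaPow (v ++ u)) := by
    rw [lt_omega_iff hv (omegaPow (u ++ v)), F2]
  have E54 : lexLt (omegaPow u) (omegaPow (u ++ v)) ↔
      lexLt (omegaPow (u ++ v)) (omegaPow (v ++ u)) := by
    have h := lexLt_prep_iff u (s := omegaPow (u ++ v)) (t := omegaPow (v ++ u))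
    rw [F3] at h
    exact (omega_lt_iff hu (omegaPow (u ++ v))).trans h
  have E64 : lexLt (omegaPow (v ++ u)) (omegaPow v) ↔
      lexLt (omegaPow (u ++ v)) (omegaPow (v ++ u)) := by
    have h := lexLt_prep_iff v (s := omegaPow (u ++ v)) (t := omegaPow (v ++ u))
    rw [F2] at h
    exact (lt_omega_iff hv (omegaPow (v ++ u))).trans h
  have E14 : lexLt (omegaPow u) (omegaPow v) ↔
      lexLt (omegaPow (u ++ v)) (omegaPow (v ++ u)) := E13.trans E34
  exact ⟨E14.trans E24.symm, E13, E14, E14.trans E54.symm, E14.trans E64.symm⟩
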